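/- arXiv:2007.14786 — 2 statements merged into one kernel-verified Lean document; each statement's English description precedes it below -/
import Mathlib

section
/- The function V̂ defined by V̂(φ) = −(φ* − φ)/(c(1+φ*)) − (2/μ²)(1+φ) ∫_{φ*/(1+φ*)}^{φ/(1+φ)} ((1−v)/v)^κ e^{κ/v} ∫₀^v u^{κ−1}/(1−u)^{κ+2} e^{−κ/u} du dv satisfies λ(1+φ) V̂'(φ) + (μ²/2) φ² V̂''(φ) − λ V̂(φ) = −(φ − λ/c) for all φ ∈ (0, φ*). -/
/-!
Put `v = φ / (1 + φ)`, so that `1 - v = 1 / (1 + φ)` and `φ² / (1 + φ)³ = v² (1 - v)`. Then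
`V̂ φ = A φ - (2/μ²) (1 + φ) G v` with `A` affine, `G' = g` and `g v = w v ∫₀^v f`, where `f` is
the inner integrand and `w v = ((1 - v)/v)^κ e^{κ/v}`. For such a "perspective" `(1 + φ) G v` the
chain rule gives `((1 + φ) G v)' = G v + g v / (1 + φ)` and `((1 + φ) G v)'' = g' v / (1 + φ)³`,
hence `(L - λ)((1 + φ) G v) = (μ²/2) (κ g + v² (1 - v) g') v`.
The weight solves `v² (1 - v) w' = -κ w` and `w f = 1 / (v (1 - v)²)`, so
`v² (1 - v) g' + κ g = v / (1 - v) = φ`. The affine part contributes `(L - λ) A = λ / c`.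
-/

open Real Set intervalIntegral Filter MeasureTheory Topology

noncomputable section

def weight (κ v : ℝ) : ℝ := ((1 - v) / v) ^ κ * exp (κ / v)

def density (κ u : ℝ) : ℝ := u ^ (κ - 1) * (1 - u) ^ (-(κ + 2)) * exp (-κ / u)

def outerIntegrand (κ v : ℝ) : ℝ := weight κ v * ∫ u in (0:ℝ)..v, density κ u

end

variable {κ v : ℝ}

theorem hasDerivAt_weight (hv0 : 0 < v) (hv1 : v < 1) :
    HasDerivAt (weight κ) (-κ * weight κ v / (v ^ 2 * (1 - v))) v := by
  have hbase : HasDerivAt (fun v : ℝ => (1 - v) / v) (-1 / v ^ 2) v :=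
    (((hasDerivAt_id v).const_sub 1).div (hasDerivAt_id v) hv0.ne').congr_deriv (by simp; ring)
  have hpos : 0 < (1 - v) / v := div_pos (by linarith) hv0
  have hexp : HasDerivAt (fun v : ℝ => exp (κ / v)) (exp (κ / v) * (-κ / v ^ 2)) v := by
    simp only [div_eq_mul_inv κ]
    exact ((hasDerivAt_inv hv0.ne').const_mul κ).exp.congr_deriv (by ring)
  refine ((hbase.rpow_const (p := κ) (Or.inl hpos.ne')).mul hexp).congr_deriv ?_
  rw [weight, rpow_sub_one hpos.ne']
  have : 1 - v ≠ 0 := by linarith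
  field_simp
  ring

theorem weight_mul_density (hv0 : 0 < v) (hv1 : v < 1) :
    weight κ v * density κ v = 1 / (v * (1 - v) ^ 2) := by
  have h1v : 0 < 1 - v := by linarith
  rw [weight, density, div_rpow h1v.le hv0.le, rpow_sub_one hv0.ne', rpow_neg h1v.le,
    rpow_add h1v, neg_div, exp_neg]
  have := (rpow_pos_of_pos hv0 κ).ne'
  have := (rpow_pos_of_pos h1v κ).ne'
  have := (exp_pos (κ / v)).ne'
  field_simp
  norm_num

theorem continuousAt_density (hv0 : 0 < v) (hv1 : v < 1) : ContinuousAt (density κ) v := by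
  have : v ≠ 0 ∨ 0 ≤ κ - 1 := Or.inl hv0.ne'
  have : 1 - v ≠ 0 ∨ 0 ≤ -(κ + 2) := Or.inl (by linarith)
  have : v ≠ 0 := hv0.ne'
  unfold density
  fun_prop (disch := assumption)

theorem tendsto_density_nhdsGT_zero (hκ : 0 < κ) : Tendsto (density κ) (𝓝[>] 0) (𝓝 0) := by
  have hexp : Tendsto (fun u : ℝ => u⁻¹ ^ (1 - κ) * exp (-κ * u⁻¹)) (𝓝[>] 0) (𝓝 0) :=
    (tendsto_rpow_mul_exp_neg_mul_atTop_nhds_zero (1 - κ) κ hκ).comp tendsto_inv_nhdsGT_zero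
  have hone : Tendsto (fun u : ℝ => (1 - u) ^ (-(κ + 2))) (𝓝[>] 0) (𝓝 1) := by
    have : ContinuousAt (fun u : ℝ => (1 - u) ^ (-(κ + 2))) 0 := by
      have : (1:ℝ) - 0 ≠ 0 ∨ 0 ≤ -(κ + 2) := Or.inl (by norm_num)
      fun_prop (disch := assumption)
    simpa using this.tendsto.mono_left nhdsWithin_le_nhds
  have h := hexp.mul hone
  rw [zero_mul] at h
  refine h.congr' ?_
  filter_upwards [self_mem_nhdsWithin] with u (hu : 0 < u)
  rw [density, inv_rpow hu.le, ← rpow_neg hu.le, neg_sub, neg_div, neg_mul, div_eq_mul_inv κ]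
  ring

theorem intervalIntegrable_density (hκ : 0 < κ) (hv0 : 0 < v) (hv1 : v < 1) :
    IntervalIntegrable (density κ) volume 0 v := by
  classical
  have : ContinuousOn (Function.update (density κ) 0 0) (Icc 0 v) := by
    refine continuousOn_update_iff.2 ⟨fun u hu => ?_, fun _ => ?_⟩
    · exact (continuousAt_density (lt_of_le_of_ne hu.1.1 (Ne.symm hu.2))
        (hu.1.2.trans_lt hv1)).continuousWithinAt
    · exact (tendsto_density_nhdsGT_zero hκ).mono_left
        (nhdsWithin_mono _ fun u hu => lt_of_le_of_ne hu.1.1 (Ne.symm hu.2))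
  refine (this.intervalIntegrable_of_Icc hv0.le).congr fun u hu => ?_
  rw [uIoc_of_le hv0.le] at hu
  exact Function.update_of_ne hu.1.ne' _ _

theorem hasDerivAt_integral_density (hκ : 0 < κ) (hv0 : 0 < v) (hv1 : v < 1) :
    HasDerivAt (fun v => ∫ u in (0:ℝ)..v, density κ u) (density κ v) v :=
  integral_hasDerivAt_right (intervalIntegrable_density hκ hv0 hv1)
    (ContinuousOn.stronglyMeasurableAtFilter isOpen_Ioo
      (fun _ hu => (continuousAt_density hu.1 hu.2).continuousWithinAt) v ⟨hv0, hv1⟩)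
    (continuousAt_density hv0 hv1)

theorem hasDerivAt_outerIntegrand (hκ : 0 < κ) (hv0 : 0 < v) (hv1 : v < 1) :
    HasDerivAt (outerIntegrand κ)
      ((v / (1 - v) - κ * outerIntegrand κ v) / (v ^ 2 * (1 - v))) v := by
  refine ((hasDerivAt_weight hv0 hv1).mul (hasDerivAt_integral_density hκ hv0 hv1)).congr_deriv ?_
  rw [weight_mul_density hv0 hv1, outerIntegrand]
  have : 1 - v ≠ 0 := by linarith
  field_simp
  ring

theorem hasDerivAt_integral_outerIntegrand (hκ : 0 < κ) {a x : ℝ} (ha : a ∈ Ioo (0:ℝ) 1)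
    (hx : x ∈ Ioo (0:ℝ) 1) :
    HasDerivAt (fun x => ∫ v in a..x, outerIntegrand κ v) (outerIntegrand κ x) x := by
  have hcont : ContinuousOn (outerIntegrand κ) (Ioo 0 1) :=
    fun v hv => (hasDerivAt_outerIntegrand hκ hv.1 hv.2).continuousAt.continuousWithinAt
  exact integral_hasDerivAt_right
    ((hcont.mono (ordConnected_Ioo.uIcc_subset ha hx)).intervalIntegrable)
    (hcont.stronglyMeasurableAtFilter isOpen_Ioo x hx)
    (hasDerivAt_outerIntegrand hκ hx.1 hx.2).continuousAt

section Perspective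

variable {G g : ℝ → ℝ} {d φ : ℝ}

theorem div_one_add_mem_Ioo (hφ : 0 < φ) : φ / (1 + φ) ∈ Ioo (0:ℝ) 1 :=
  ⟨by positivity, (div_lt_one (by positivity)).2 (by linarith)⟩

theorem hasDerivAt_div_one_add (hφ : 1 + φ ≠ 0) :
    HasDerivAt (fun φ => φ / (1 + φ)) (1 / (1 + φ) ^ 2) φ :=
  ((hasDerivAt_id φ).div ((hasDerivAt_id φ).const_add 1) hφ).congr_deriv (by simp)

theorem hasDerivAt_perspective (hG : HasDerivAt G d (φ / (1 + φ))) (hφ : 1 + φ ≠ 0) :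
    HasDerivAt (fun φ => (1 + φ) * G (φ / (1 + φ))) (G (φ / (1 + φ)) + d / (1 + φ)) φ := by
  refine (((hasDerivAt_id φ).const_add 1).mul (hG.comp φ (hasDerivAt_div_one_add hφ))).congr_deriv ?_
  simp only [Function.comp_apply, id]
  field_simp

theorem hasDerivAt_deriv_perspective (hG : HasDerivAt G (g (φ / (1 + φ))) (φ / (1 + φ)))
    (hg : HasDerivAt g d (φ / (1 + φ))) (hφ : 1 + φ ≠ 0) :
    HasDerivAt (fun φ => G (φ / (1 + φ)) + g (φ / (1 + φ)) / (1 + φ)) (d / (1 + φ) ^ 3) φ := by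
  have hψ := hasDerivAt_div_one_add hφ
  refine ((hG.comp φ hψ).add ((hg.comp φ hψ).div ((hasDerivAt_id φ).const_add 1) hφ)).congr_deriv ?_
  simp only [Function.comp_apply, id]
  field_simp
  ring

end Perspective

theorem stmt10_general (lam μ c : ℝ) (hlam : 0 < lam) (hμ : μ ≠ 0)
    (κ : ℝ) (hκ : κ = 2 * lam / μ ^ 2)
    (φs : ℝ)
    (V : ℝ → ℝ)
    (hV : ∀ φ : ℝ, V φ =
      -((φs - φ) / (c * (1 + φs)))
      - 2 / μ ^ 2 * (1 + φ) *
        ∫ v in (φs / (1 + φs))..(φ / (1 + φ)),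
          ((1 - v) / v) ^ κ * Real.exp (κ / v) *
            ∫ u in (0:ℝ)..v, u ^ (κ - 1) * (1 - u) ^ (-(κ + 2)) * Real.exp (-κ / u)) :
    ∀ φ ∈ Set.Ioo (0:ℝ) φs,
      lam * (1 + φ) * deriv V φ + μ ^ 2 / 2 * φ ^ 2 * deriv (deriv V) φ
        - lam * V φ = -(φ - lam / c) := by
  rintro φ ⟨hφ0, hφφs⟩
  have hκ0 : 0 < κ := hκ ▸ by positivity
  set G := fun x => ∫ v in (φs / (1 + φs))..x, outerIntegrand κ v
  have hVG : ∀ x, V x = -((φs - x) / (c * (1 + φs))) - 2 / μ ^ 2 * ((1 + x) * G (x / (1 + x))) :=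
    fun x => by rw [hV, mul_assoc]; rfl
  have hG : ∀ x, 0 < x → HasDerivAt G (outerIntegrand κ (x / (1 + x))) (x / (1 + x)) :=
    fun x hx => hasDerivAt_integral_outerIntegrand hκ0
      (div_one_add_mem_Ioo (hφ0.trans hφφs)) (div_one_add_mem_Ioo hx)
  have hV' : ∀ x, 0 < x → HasDerivAt V (1 / (c * (1 + φs)) -
      2 / μ ^ 2 * (G (x / (1 + x)) + outerIntegrand κ (x / (1 + x)) / (1 + x))) x := by
    intro x hx
    have hA : HasDerivAt (fun x => -((φs - x) / (c * (1 + φs)))) (1 / (c * (1 + φs))) x :=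
      (((hasDerivAt_id x).const_sub φs).div_const _).neg.congr_deriv (by ring)
    exact (hA.sub ((hasDerivAt_perspective (hG x hx) (by positivity)).const_mul (2 / μ ^ 2)))
      |>.congr_of_eventuallyEq (Eventually.of_forall hVG)
  have hg := hasDerivAt_outerIntegrand hκ0 (div_one_add_mem_Ioo hφ0).1 (div_one_add_mem_Ioo hφ0).2
  have hV'' := (((hasDerivAt_deriv_perspective (hG φ hφ0) hg (by positivity)).const_mul
    (2 / μ ^ 2)).const_sub (1 / (c * (1 + φs)))).congr_of_eventuallyEq (f₁ := deriv V)
    (by filter_upwards [Ioi_mem_nhds hφ0] with x hx using (hV' x hx).deriv)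
  rw [(hV' φ hφ0).deriv, hV''.deriv, hVG φ]
  have : 1 + φ ≠ 0 := by positivity
  have : 1 + φs ≠ 0 := by linarith
  subst hκ
  field_simp
  ring

/-- the candidate value function `V̂` solves the free-boundary
ODE `λ(1+φ) V̂' + (μ²/2) φ² V̂'' − λ V̂ = −(φ − λ/c)` on `(0, φ*)`. -/
theorem stmt10 (lam μ c : ℝ) (hlam : 0 < lam) (hμ : μ ≠ 0) (hc : 0 < c)
    (κ : ℝ) (hκ : κ = 2 * lam / μ ^ 2)
    (φs : ℝ) (hφs : lam / c < φs)
    (V : ℝ → ℝ)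
    (hV : ∀ φ : ℝ, V φ =
      -((φs - φ) / (c * (1 + φs)))
      - 2 / μ ^ 2 * (1 + φ) *
        ∫ v in (φs / (1 + φs))..(φ / (1 + φ)),
          ((1 - v) / v) ^ κ * Real.exp (κ / v) *
            ∫ u in (0:ℝ)..v, u ^ (κ - 1) * (1 - u) ^ (-(κ + 2)) * Real.exp (-κ / u)) :
    ∀ φ ∈ Set.Ioo (0:ℝ) φs,
      lam * (1 + φ) * deriv V φ + μ ^ 2 / 2 * φ ^ 2 * deriv (deriv V) φ
        - lam * V φ = -(φ - lam / c) :=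
  stmt10_general lam μ c hlam hμ κ hκ φs V hV
end

section
/- If A > 0 then the function φ ↦ A(1+φ)∫_{1/2}^{φ/(1+φ)} ((1−v)/v)^κ e^{κ/v} dv has right derivative +∞ at 0, and if A < 0 its right derivative at 0 is −∞. -/
/-!
With `g = φ / (1 + φ)` and `f` the integrand, `h'(φ) = A (∫_{1/2}^g f + f(g) / (1 + φ))`.
Since `f` is decreasing on `(0, 1)`, `∫_g^{1/2} f ≤ (1/2 - g) f(g)`, so the bracket is at least
`f(g) / 2`, which tends to `+∞` as `φ → 0+` since both factors of `f(v) = ((1 - v) / v)^κ e^{κ/v}`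
do as `v → 0+`.
The sign of `A` then decides the limit of `h'`.
-/

open Real Set Filter intervalIntegral Topology MeasureTheory

noncomputable def integrand (κ v : ℝ) : ℝ := ((1 - v) / v) ^ κ * exp (κ / v)

lemma continuousOn_integrand (κ : ℝ) : ContinuousOn (integrand κ) (Ioo 0 1) := by
  intro v ⟨hv0, hv1⟩
  have hbase : 0 < (1 - v) / v := div_pos (by linarith) hv0
  refine ContinuousAt.continuousWithinAt ?_
  unfold integrand
  fun_prop (disch := first | exact Or.inl hbase.ne' | exact hv0.ne')

lemma antitoneOn_integrand {κ : ℝ} (hκ : 0 ≤ κ) : AntitoneOn (integrand κ) (Ioo 0 1) := by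
  intro a ⟨ha0, ha1⟩ b ⟨hb0, hb1⟩ hab
  have hbase : (1 - b) / b ≤ (1 - a) / a := by
    rw [div_le_div_iff₀ hb0 ha0]; nlinarith
  exact mul_le_mul (rpow_le_rpow (div_nonneg (by linarith) hb0.le) hbase hκ)
    (exp_le_exp.2 (div_le_div_of_nonneg_left hκ ha0 hab)) (exp_pos _).le (by positivity)

lemma tendsto_integrand_nhdsGT_zero {κ : ℝ} (hκ : 0 < κ) :
    Tendsto (integrand κ) (𝓝[>] 0) atTop := by
  have hratio : Tendsto (fun v : ℝ => (1 - v) / v) (𝓝[>] 0) atTop := by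
    refine (tendsto_atTop_add_const_right _ (-1) tendsto_inv_nhdsGT_zero).congr' ?_
    filter_upwards [self_mem_nhdsWithin] with v (hv : 0 < v)
    field_simp
    ring
  have hexp : Tendsto (fun v : ℝ => exp (κ / v)) (𝓝[>] 0) atTop := by
    simpa only [div_eq_mul_inv, Function.comp_def] using
      tendsto_exp_atTop.comp (tendsto_inv_nhdsGT_zero.const_mul_atTop hκ)
  exact ((tendsto_rpow_atTop hκ).comp hratio).atTop_mul_atTop₀ hexp

lemma AntitoneOn.integral_le_sub_mul {f : ℝ → ℝ} {a b : ℝ} (hab : a ≤ b)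
    (hf : AntitoneOn f (Icc a b)) : ∫ x in a..b, f x ≤ (b - a) * f a := by
  calc ∫ x in a..b, f x ≤ ∫ _ in a..b, f a :=
        integral_mono_on hab (AntitoneOn.intervalIntegrable (by rwa [uIcc_of_le hab]))
          intervalIntegrable_const fun x hx => hf ⟨le_rfl, hab⟩ hx hx.1
    _ = (b - a) * f a := by simp

lemma hasDerivAt_mul_integral_div_one_add {f : ℝ → ℝ} {a φ : ℝ} (A : ℝ) (hφ : 1 + φ ≠ 0)
    (hint : IntervalIntegrable f volume a (φ / (1 + φ)))
    (hmeas : StronglyMeasurableAtFilter f (𝓝 (φ / (1 + φ))))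
    (hcont : ContinuousAt f (φ / (1 + φ))) :
    HasDerivAt (fun x => A * (1 + x) * ∫ v in a..x / (1 + x), f v)
      (A * ((∫ v in a..φ / (1 + φ), f v) + f (φ / (1 + φ)) / (1 + φ))) φ := by
  have hratio : HasDerivAt (fun x : ℝ => x / (1 + x)) (1 / (1 + φ) ^ 2) φ := by
    refine ((hasDerivAt_id' φ).div ((hasDerivAt_id' φ).const_add 1) hφ).congr_deriv ?_
    ring
  have hlin : HasDerivAt (fun x : ℝ => A * (1 + x)) A φ := by
    simpa using ((hasDerivAt_id' φ).const_add 1).const_mul A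
  refine (hlin.mul ((integral_hasDerivAt_right hint hmeas hcont).comp φ hratio)).congr_deriv ?_
  simp only [Function.comp_apply]
  field_simp

lemma div_two_le_integral_add_div {f : ℝ → ℝ} {φ : ℝ} (hφ0 : 0 ≤ φ) (hφ1 : φ ≤ 1)
    (hf : AntitoneOn f (Icc (φ / (1 + φ)) (1 / 2))) :
    f (φ / (1 + φ)) / 2 ≤ (∫ v in (1 / 2)..φ / (1 + φ), f v) + f (φ / (1 + φ)) / (1 + φ) := by
  have hle : φ / (1 + φ) ≤ 1 / 2 := by
    rw [div_le_div_iff₀ (by linarith) two_pos]; linarith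
  have := hf.integral_le_sub_mul hle
  rw [integral_symm]
  -- `1 / (1 + φ) = 1 - g` with `g = φ / (1 + φ)` cancels the `g` in the bound `(1/2 - g) f(g)`.
  have hinv : f (φ / (1 + φ)) / (1 + φ) = f (φ / (1 + φ)) * (1 - φ / (1 + φ)) := by
    field_simp; ring
  linarith

lemma hasDerivAt_mul_integral_integrand (κ A : ℝ) {φ : ℝ} (hφ : 0 < φ) :
    HasDerivAt (fun x => A * (1 + x) * ∫ v in (1 / 2)..x / (1 + x), integrand κ v)
      (A * ((∫ v in (1 / 2)..φ / (1 + φ), integrand κ v)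
        + integrand κ (φ / (1 + φ)) / (1 + φ))) φ := by
  have hg : φ / (1 + φ) ∈ Ioo (0 : ℝ) 1 :=
    ⟨by positivity, (div_lt_one (by positivity)).2 (by linarith)⟩
  have hsub : uIcc (1 / 2) (φ / (1 + φ)) ⊆ Ioo 0 1 :=
    ordConnected_Ioo.uIcc_subset ⟨by norm_num, by norm_num⟩ hg
  exact hasDerivAt_mul_integral_div_one_add A (by positivity)
    ((continuousOn_integrand κ).mono hsub).intervalIntegrable
    ((continuousOn_integrand κ).stronglyMeasurableAtFilter isOpen_Ioo _ hg)
    ((continuousOn_integrand κ).continuousAt (isOpen_Ioo.mem_nhds hg))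

lemma tendsto_integral_add_integrand_div {κ : ℝ} (hκ : 0 < κ) :
    Tendsto (fun φ => (∫ v in (1 / 2)..φ / (1 + φ), integrand κ v)
      + integrand κ (φ / (1 + φ)) / (1 + φ)) (𝓝[>] 0) atTop := by
  have hratio : Tendsto (fun φ : ℝ => φ / (1 + φ)) (𝓝[>] 0) (𝓝[>] 0) := by
    refine tendsto_nhdsWithin_of_tendsto_nhds_of_eventually_within _ ?_ ?_
    · have : ContinuousAt (fun φ : ℝ => φ / (1 + φ)) 0 := by fun_prop (disch := norm_num)
      simpa using this.tendsto.mono_left nhdsWithin_le_nhds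
    · filter_upwards [self_mem_nhdsWithin] with φ (hφ : 0 < φ)
      exact div_pos hφ (by linarith)
  refine tendsto_atTop_mono' _ ?_
    (((tendsto_integrand_nhdsGT_zero hκ).comp hratio).atTop_div_const two_pos)
  filter_upwards [Ioo_mem_nhdsGT one_pos] with φ ⟨hφ0, hφ1⟩
  refine div_two_le_integral_add_div hφ0.le hφ1.le ((antitoneOn_integrand hκ.le).mono ?_)
  exact fun v hv => ⟨(div_pos hφ0 (by linarith)).trans_le hv.1, hv.2.trans_lt (by norm_num)⟩

theorem stmt11_general (κ A : ℝ) (hκ : 0 < κ)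
    (h : ℝ → ℝ)
    (hh : ∀ φ : ℝ, h φ =
      A * (1 + φ) * ∫ v in (1/2 : ℝ)..(φ / (1 + φ)),
        ((1 - v) / v) ^ κ * Real.exp (κ / v)) :
    (0 < A → Filter.Tendsto (deriv h) (nhdsWithin 0 (Set.Ioi 0)) Filter.atTop) ∧
    (A < 0 → Filter.Tendsto (deriv h) (nhdsWithin 0 (Set.Ioi 0)) Filter.atBot) := by
  obtain rfl := funext hh
  have hderiv := eventually_nhdsWithin_of_forall (a := 0) fun φ (hφ : 0 < φ) =>
    ((hasDerivAt_mul_integral_integrand κ A hφ).deriv).symm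
  have hlim := tendsto_integral_add_integrand_div hκ
  exact ⟨fun hA => (hlim.const_mul_atTop hA).congr' hderiv,
    fun hA => (hlim.const_mul_atTop_of_neg hA).congr' hderiv⟩

/-- the derivative of
`h(φ) = A(1+φ)∫_{1/2}^{φ/(1+φ)} ((1−v)/v)^κ e^{κ/v} dv`
tends to `+∞` as `φ → 0+` if `A > 0`, and to `−∞` if `A < 0`. -/
theorem stmt11 (κ A : ℝ) (hκ : 0 < κ) (hA : A ≠ 0)
    (h : ℝ → ℝ)
    (hh : ∀ φ : ℝ, h φ =
      A * (1 + φ) * ∫ v in (1/2 : ℝ)..(φ / (1 + φ)),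
        ((1 - v) / v) ^ κ * Real.exp (κ / v)) :
    (0 < A → Filter.Tendsto (deriv h) (nhdsWithin 0 (Set.Ioi 0)) Filter.atTop) ∧
    (A < 0 → Filter.Tendsto (deriv h) (nhdsWithin 0 (Set.Ioi 0)) Filter.atBot) :=
  stmt11_general κ A hκ h hh
end
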